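/- Let u : ℝ³ → ℝ be a smooth (C^∞) function satisfying the Janet system, i.e. ∂₃∂₃u(x) = x² ∂₁∂₁u(x) and ∂₂∂₂u(x) = 0 for every x = (x¹,x²,x³) ∈ ℝ³. Then ∂₁∂₁∂₃∂₃u(x) = 0 for every x ∈ ℝ³. -/

import Mathlib

/-- Partial derivative of `f : ℝ³ → ℝ` with respect to the `i`-th coordinate,
taken as the derivative along the corresponding coordinate line. -/
noncomputable def pd (i : Fin 3) (f : (Fin 3 → ℝ) → ℝ) : (Fin 3 → ℝ) → ℝ :=
  fun x => deriv (fun t => f (Function.update x i t)) (x i)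

open Function

lemma update_eq_add (x : Fin 3 → ℝ) (i : Fin 3) (t : ℝ) :
    Function.update x i t = x + (t - x i) • (Pi.single i 1 : Fin 3 → ℝ) := by
  ext j
  rcases eq_or_ne j i with h | h
  · subst h; simp
  · simp [Function.update_of_ne h, Pi.single_apply, h]

lemma hasDerivAt_line (x : Fin 3 → ℝ) (i : Fin 3) (t : ℝ) :
    HasDerivAt (fun s => Function.update x i s) (Pi.single i (1:ℝ)) t := by
  have h : HasDerivAt (fun s : ℝ => x + (s - x i) • (Pi.single i 1 : Fin 3 → ℝ))
      ((1:ℝ) • (Pi.single i 1 : Fin 3 → ℝ)) t :=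
    (((hasDerivAt_id t).sub_const (x i)).smul_const _).const_add x
  simpa [funext fun s => update_eq_add x i s] using h

lemma hasDerivAt_curve {f : (Fin 3 → ℝ) → ℝ} (hf : ContDiff ℝ (⊤ : ℕ∞) f) (i : Fin 3)
    (x : Fin 3 → ℝ) :
    HasDerivAt (fun t => f (Function.update x i t)) (fderiv ℝ f x (Pi.single i 1)) (x i) := by
  have hd : HasFDerivAt f (fderiv ℝ f x) (Function.update x i (x i)) := by
    rw [Function.update_eq_self]
    exact (hf.differentiable (by simp) x).hasFDerivAt
  exact hd.comp_hasDerivAt (x i) (hasDerivAt_line x i (x i))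

lemma pd_eq_fderiv {f : (Fin 3 → ℝ) → ℝ} (hf : ContDiff ℝ (⊤ : ℕ∞) f) (i : Fin 3)
    (x : Fin 3 → ℝ) : pd i f x = fderiv ℝ f x (Pi.single i 1) :=
  (hasDerivAt_curve hf i x).deriv

lemma pd_smooth {f : (Fin 3 → ℝ) → ℝ} (hf : ContDiff ℝ (⊤ : ℕ∞) f) (i : Fin 3) :
    ContDiff ℝ (⊤ : ℕ∞) (pd i f) := by
  have : pd i f = fun x => (ContinuousLinearMap.apply ℝ ℝ (Pi.single i 1)) (fderiv ℝ f x) :=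
    funext fun x => pd_eq_fderiv hf i x
  rw [this]
  exact (ContinuousLinearMap.apply ℝ ℝ (Pi.single i 1)).contDiff.comp
    (hf.fderiv_right (m := (⊤ : ℕ∞)) (by simp))

lemma pd_comm {f : (Fin 3 → ℝ) → ℝ} (hf : ContDiff ℝ (⊤ : ℕ∞) f) (i j : Fin 3) :
    pd i (pd j f) = pd j (pd i f) := by
  funext x
  have hder : ∀ k : Fin 3, ∀ y : Fin 3 → ℝ,
      pd k f y = fderiv ℝ f y (Pi.single k 1) := fun k y => pd_eq_fderiv hf k y
  have hfd : ∀ y, HasFDerivAt f (fderiv ℝ f y) y :=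
    fun y => (hf.differentiable (by simp) y).hasFDerivAt
  have hfd2 : HasFDerivAt (fderiv ℝ f) (fderiv ℝ (fderiv ℝ f) x) x :=
    (((hf.fderiv_right (m := (⊤ : ℕ∞)) (by simp)).differentiable (by simp)) x).hasFDerivAt
  have symm := second_derivative_symmetric hfd hfd2
  have key : ∀ k l : Fin 3,
      pd k (pd l f) x = fderiv ℝ (fderiv ℝ f) x (Pi.single k 1) (Pi.single l 1) := by
    intro k l
    have hcomp := (ContinuousLinearMap.apply ℝ ℝ (Pi.single l 1 : Fin 3 → ℝ)).hasFDerivAt.comp x hfd2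
    have hsm : ContDiff ℝ (⊤ : ℕ∞) (pd l f) := pd_smooth hf l
    rw [pd_eq_fderiv hsm k x]
    have hpl : pd l f = (ContinuousLinearMap.apply ℝ ℝ (Pi.single l 1 : Fin 3 → ℝ)) ∘ fderiv ℝ f :=
      funext fun y => hder l y
    rw [hpl, hcomp.fderiv]
    rfl
  rw [key i j, key j i, symm]

lemma pd_of_indep {f : (Fin 3 → ℝ) → ℝ} {i : Fin 3}
    (h : ∀ (y : Fin 3 → ℝ) (t : ℝ), f (Function.update y i t) = f y)
    (j : Fin 3) (hij : j ≠ i) (x : Fin 3 → ℝ) (t : ℝ) :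
    pd j f (Function.update x i t) = pd j f x := by
  unfold pd
  rw [Function.update_of_ne hij]
  congr 1
  funext s
  rw [Function.update_comm hij.symm, h]

lemma indep_of_pd_zero {f : (Fin 3 → ℝ) → ℝ} (hf : ContDiff ℝ (⊤ : ℕ∞) f) {i : Fin 3}
    (h : ∀ y, pd i f y = 0) (x : Fin 3 → ℝ) (t : ℝ) :
    f (Function.update x i t) = f x := by
  have hdiff : Differentiable ℝ (fun s => f (Function.update x i s)) := by
    intro s
    have := hasDerivAt_curve hf i (Function.update x i s)
    simp only [Function.update_self, Function.update_idem] at this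
    exact this.differentiableAt
  have hzero : ∀ s, deriv (fun s => f (Function.update x i s)) s = 0 := by
    intro s
    have := h (Function.update x i s)
    unfold pd at this
    simpa only [Function.update_self, Function.update_idem] using this
  have := is_const_of_deriv_eq_zero hdiff hzero t (x i)
  simpa using this

/-- pd along coordinate 0 of `x 1 * f x`. -/
lemma pd0_mul {f : (Fin 3 → ℝ) → ℝ} (hf : ContDiff ℝ (⊤ : ℕ∞) f) (x : Fin 3 → ℝ) :
    pd 0 (fun y => y 1 * f y) x = x 1 * pd 0 f x := by
  unfold pd
  have h1 : ∀ t : ℝ, (Function.update x 0 t) 1 = x 1 := fun t =>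
    Function.update_of_ne (by decide) _ _
  have : (fun t => (Function.update x 0 t) 1 * f (Function.update x 0 t))
      = fun t => x 1 * f (Function.update x 0 t) := by
    funext t; rw [h1]
  rw [this, deriv_const_mul]
  exact (hasDerivAt_curve hf 0 x).differentiableAt

/-- pd along coordinate 1 of `x 1 * f x`. -/
lemma pd1_mul {f : (Fin 3 → ℝ) → ℝ} (hf : ContDiff ℝ (⊤ : ℕ∞) f) (x : Fin 3 → ℝ) :
    pd 1 (fun y => y 1 * f y) x = f x + x 1 * pd 1 f x := by
  have hc : HasDerivAt (fun t => f (Function.update x 1 t))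
      (fderiv ℝ f x (Pi.single 1 1)) (x 1) := hasDerivAt_curve hf 1 x
  have hmul : HasDerivAt (fun t => t * f (Function.update x 1 t))
      (1 * f (Function.update x 1 (x 1)) + x 1 * fderiv ℝ f x (Pi.single 1 1)) (x 1) :=
    (hasDerivAt_id (x 1)).mul hc
  have heq : (fun t => (Function.update x 1 t) 1 * f (Function.update x 1 t))
      = fun t => t * f (Function.update x 1 t) := by
    funext t; rw [Function.update_self]
  unfold pd
  rw [heq, hmul.deriv, Function.update_eq_self, one_mul, hc.deriv]

lemma pd_zero (i : Fin 3) : pd i (fun _ => (0:ℝ)) = fun _ => 0 := by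
  funext x; simp [pd]

lemma hasDerivAt_pd {f : (Fin 3 → ℝ) → ℝ} (hf : ContDiff ℝ (⊤ : ℕ∞) f) (i : Fin 3)
    (x : Fin 3 → ℝ) :
    HasDerivAt (fun t => f (Function.update x i t)) (pd i f x) (x i) := by
  rw [pd_eq_fderiv hf]; exact hasDerivAt_curve hf i x

lemma pd_comm3 {f : (Fin 3 → ℝ) → ℝ} (hf : ContDiff ℝ (⊤ : ℕ∞) f) (i j : Fin 3) :
    pd i (pd j (pd j f)) = pd j (pd j (pd i f)) := by
  rw [pd_comm (pd_smooth hf j) i j, pd_comm hf i j]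

/-- A smooth solution of the Janet system ∂₃∂₃u = x²∂₁∂₁u, ∂₂∂₂u = 0 satisfies ∂₁∂₁∂₃∂₃u = 0.  Coordinate `xⁱ` corresponds to index `i - 1 : Fin 3`. -/
theorem janet_u1133_eq_zero
    (u : (Fin 3 → ℝ) → ℝ) (hu : ContDiff ℝ (⊤ : ℕ∞) u)
    (hJ1 : ∀ x : Fin 3 → ℝ, pd 2 (pd 2 u) x = x 1 * pd 0 (pd 0 u) x)
    (hJ2 : ∀ x : Fin 3 → ℝ, pd 1 (pd 1 u) x = 0) :
    ∀ x : Fin 3 → ℝ, pd 0 (pd 0 (pd 2 (pd 2 u))) x = 0 := by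
  set w := pd 0 (pd 0 u) with hw_def
  have hw : ContDiff ℝ (⊤ : ℕ∞) w := pd_smooth (pd_smooth hu 0) 0
  have hW : pd 2 (pd 2 u) = fun x => x 1 * w x := funext hJ1
  have h22 : pd 1 (pd 1 u) = fun _ => (0:ℝ) := funext hJ2
  -- Step 1: pd 1 w = 0
  have hA : pd 1 (pd 1 (pd 2 (pd 2 u))) = fun _ => (0:ℝ) := by
    calc pd 1 (pd 1 (pd 2 (pd 2 u))) = pd 1 (pd 2 (pd 2 (pd 1 u))) := by
          rw [pd_comm3 hu 1 2]
      _ = pd 2 (pd 2 (pd 1 (pd 1 u))) := pd_comm3 (pd_smooth hu 1) 1 2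
      _ = fun _ => 0 := by rw [h22, pd_zero, pd_zero]
  have h11w : pd 1 (pd 1 w) = fun _ => (0:ℝ) := by
    calc pd 1 (pd 1 w) = pd 1 (pd 0 (pd 0 (pd 1 u))) := by rw [hw_def, pd_comm3 hu 1 0]
      _ = pd 0 (pd 0 (pd 1 (pd 1 u))) := pd_comm3 (pd_smooth hu 1) 1 0
      _ = fun _ => 0 := by rw [h22, pd_zero, pd_zero]
  have hpd1w : ∀ x, pd 1 w x = 0 := by
    intro x
    have hB : pd 1 (pd 1 (fun y => y 1 * w y)) x = 0 := by
      rw [← hW]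
      exact congrFun hA x
    have hfirst : pd 1 (fun y => y 1 * w y) = fun y => w y + y 1 * pd 1 w y :=
      funext fun y => pd1_mul hw y
    rw [hfirst] at hB
    have hsum : HasDerivAt
        (fun t => w (Function.update x 1 t) +
          (Function.update x 1 t) 1 * pd 1 w (Function.update x 1 t))
        (pd 1 w x + (1 * pd 1 w x + x 1 * pd 1 (pd 1 w) x)) (x 1) := by
      have h1 := hasDerivAt_pd hw 1 x
      have h2 := hasDerivAt_pd (pd_smooth hw 1) 1 x
      have := h1.add ((hasDerivAt_id (x 1)).mul h2)
      simp only [Function.update_eq_self, id_eq] at this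
      refine this.congr_of_eventuallyEq (Filter.Eventually.of_forall fun t => ?_)
      simp only [Function.update_self]; rfl
    have hBval : pd 1 (fun y => w y + y 1 * pd 1 w y) x
        = pd 1 w x + (1 * pd 1 w x + x 1 * pd 1 (pd 1 w) x) := hsum.deriv
    rw [hBval] at hB
    have : pd 1 (pd 1 w) x = 0 := congrFun h11w x
    rw [this] at hB
    linarith
  -- Step 2: independence of coordinate 1
  have hindep : ∀ (y : Fin 3 → ℝ) (t : ℝ), w (Function.update y 1 t) = w y :=
    indep_of_pd_zero hw hpd1w
  set g := pd 0 (pd 0 w) with hg_def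
  have hind0 : ∀ (y : Fin 3 → ℝ) (t : ℝ), pd 0 w (Function.update y 1 t) = pd 0 w y :=
    fun y t => pd_of_indep hindep 0 (by decide) y t
  have hindg : ∀ (y : Fin 3 → ℝ) (t : ℝ), g (Function.update y 1 t) = g y :=
    fun y t => pd_of_indep hind0 0 (by decide) y t
  have hind2 : ∀ (y : Fin 3 → ℝ) (t : ℝ), pd 2 w (Function.update y 1 t) = pd 2 w y :=
    fun y t => pd_of_indep hindep 2 (by decide) y t
  have hind22 : ∀ (y : Fin 3 → ℝ) (t : ℝ),
      pd 2 (pd 2 w) (Function.update y 1 t) = pd 2 (pd 2 w) y :=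
    fun y t => pd_of_indep hind2 2 (by decide) y t
  -- Step 3: two expressions for pd0 pd0 pd2 pd2 u
  have key : pd 0 (pd 0 (pd 2 (pd 2 u))) = fun x => x 1 * g x := by
    rw [hW]
    have h1 : pd 0 (fun y => y 1 * w y) = fun y => y 1 * pd 0 w y :=
      funext fun y => pd0_mul hw y
    rw [h1]
    exact funext fun y => pd0_mul (pd_smooth hw 0) y
  have key2 : pd 0 (pd 0 (pd 2 (pd 2 u))) = pd 2 (pd 2 w) := by
    calc pd 0 (pd 0 (pd 2 (pd 2 u))) = pd 0 (pd 2 (pd 2 (pd 0 u))) := by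
          rw [pd_comm3 hu 0 2]
      _ = pd 2 (pd 2 (pd 0 (pd 0 u))) := pd_comm3 (pd_smooth hu 0) 0 2
  -- Step 4: conclude
  intro x
  have hgx : g x = 0 := by
    have hrel : pd 2 (pd 2 w) = fun y => y 1 * g y := by rw [← key2, key]
    have h1 := congrFun hrel x
    have h2 := congrFun hrel (Function.update x 1 (x 1 + 1))
    rw [hind22, hindg, Function.update_self] at h2
    rw [h1] at h2
    linarith
  rw [key]
  simp [hgx]
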